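/- arXiv:1704.01091 — 3 statements merged into one kernel-verified Lean document; each statement's English description precedes it below -/
import Mathlib

section
/- Let (W,S) be a finite Coxeter system which is a direct product of irreducible finite Coxeter systems, each of whose Coxeter numbers is at least 3 (for Weyl groups this is exactly the condition that no irreducible factor is of type A_1). Then every fat ideal I of the Bruhat order on W contains every element w in W with length l(w) at most 1, i.e., the identity and every simple reflection s in S lie in I. -/
/-- The Bruhat order on a Coxeter group: `x ≤ y` if and only if `x` is the product of
a subword of some reduced word for `y`. -/
def CoxeterSystem.bruhatLE {B W : Type*} [Group W] {M : CoxeterMatrix B}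
    (cs : CoxeterSystem M W) (x y : W) : Prop :=
  ∃ ω : List B, cs.IsReduced ω ∧ cs.wordProd ω = y ∧
    ∃ ω' : List B, ω'.Sublist ω ∧ cs.wordProd ω' = x

/-- Two indices lie in the same irreducible component of a Coxeter system iff they are
related by the equivalence closure of adjacency in the Coxeter diagram (distinct indices
`a`, `b` are adjacent iff `M a b ≠ 2`). -/
def CoxeterMatrix.SameComponent {B : Type*} (M : CoxeterMatrix B) (i j : B) : Prop :=
  Relation.EqvGen (fun a b => a ≠ b ∧ M a b ≠ 2) i j

/-!
If `s i ∉ I`, fatness puts `w₀ * s i` in `I`, so it suffices to find a reduced word for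
`w₀ * s i` containing the letter `i`: then `s i ≤ w₀ * s i`. Suppose a word `ω` for `w₀ * s i`
avoids `i`. Every reflection is a left inversion of the longest element `w₀ = π (ω ++ [i])`, so by
the strong exchange condition it occurs in the left inversion sequence of `ω ++ [i]`. All entries
of that sequence except the last lie in the parabolic subgroup generated by the `s k` with
`k ≠ i`. Neither `s i` nor `s j * s i * s j` lies in it, for a neighbour `j` of `i` in the
Coxeter diagram (there is one since the Coxeter number of the component of `i` is at least `3`),
so both equal the last entry, forcing `s i` and `s j` to commute, which they do not.

Strong exchange comes from Tits' sign representation of `W` on `W × ZMod 2`; the two facts about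
`s i` and `s j` come from the geometric representation on `B →₀ ℝ`, where the parabolic subgroup
preserves the coordinate at `i`.
-/

section

open Real Polynomial.Chebyshev

namespace Polynomial.Chebyshev

theorem S_eval_two_mul_cos_pi_div_eq_zero {q : ℕ} (hq : 2 ≤ q) :
    (S ℝ ((q : ℤ) - 1)).eval (2 * cos (π / q)) = 0 := by
  have hsin : sin (π / q) ≠ 0 := by
    apply (sin_pos_of_pos_of_lt_pi (by positivity) _).ne'
    exact div_lt_self pi_pos (by exact_mod_cast hq)
  have h := S_two_mul_real_cos (π / q) ((q : ℤ) - 1)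
  rw [show (((q : ℤ) - 1 : ℤ) : ℝ) + 1 = q by push_cast; ring, mul_div_cancel₀ _ (by positivity),
    sin_pi] at h
  exact (mul_eq_zero.mp h).resolve_right hsin

theorem S_eval_add_S_eval_two_mul_cos_eq_zero {q : ℕ} (hq : 1 ≤ q) :
    (S ℝ q).eval (2 * cos (2 * π / (2 * q + 1))) +
      (S ℝ ((q : ℤ) - 1)).eval (2 * cos (2 * π / (2 * q + 1))) = 0 := by
  set θ := 2 * π / (2 * q + 1)
  have hθ : (2 * q + 1) * θ = 2 * π := mul_div_cancel₀ _ (by positivity)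
  have hsin : sin θ ≠ 0 := by
    apply (sin_pos_of_pos_of_lt_pi (by positivity) _).ne'
    rw [div_lt_iff₀ (by positivity)]
    have : (1 : ℝ) ≤ q := by exact_mod_cast hq
    nlinarith [pi_pos]
  have h₁ := S_two_mul_real_cos θ q
  have h₂ := S_two_mul_real_cos θ ((q : ℤ) - 1)
  have e : sin ((q + 1) * θ) = - sin (q * θ) := by
    rw [show ((q : ℝ) + 1) * θ = 2 * π - q * θ by linarith, sin_two_pi_sub]
  push_cast at h₁ h₂
  rw [sub_add_cancel] at h₂
  apply mul_right_cancel₀ hsin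
  linear_combination h₁ + h₂ + e

end Polynomial.Chebyshev

theorem Module.reflection_mul_reflection_pow_eq_one {V : Type*} [AddCommGroup V] [Module ℝ V]
    {x y : V} {f g : Module.Dual ℝ V} (hf : f x = 2) (hg : g y = 2) {m : ℕ} (hm : 3 ≤ m)
    (h : f y * g x = 4 * cos (π / m) ^ 2) :
    (Module.reflection hf * Module.reflection hg) ^ m = 1 := by
  set t := 2 * cos (2 * π / m) with ht_def
  have ht : t = f y * g x - 2 := by
    rw [h, ht_def, mul_div_assoc, cos_two_mul]
    ring
  -- the two coefficients in `Module.reflection_mul_reflection_pow`; they vanish because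
  -- `(S ℝ k).eval (2 * cos θ) = sin ((k + 1) * θ) / sin θ`, here with `θ = 2 * π / m`
  have hcoeffs : (S ℝ ((m - 2 : ℤ) / 2)).eval t *
        ((S ℝ ((m - 1 : ℤ) / 2)).eval t + (S ℝ ((m - 3 : ℤ) / 2)).eval t) = 0 ∧
      (S ℝ ((m - 1 : ℤ) / 2)).eval t *
        ((S ℝ ((m : ℤ) / 2)).eval t + (S ℝ ((m - 2 : ℤ) / 2)).eval t) = 0 := by
    obtain ⟨q, rfl | rfl⟩ := Nat.even_or_odd' m
    · have h₁ : ((2 * q : ℕ) - 2 : ℤ) / 2 = q - 1 := by omega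
      have h₂ : ((2 * q : ℕ) - 1 : ℤ) / 2 = q - 1 := by omega
      have hθ : 2 * π / (2 * q : ℕ) = π / q := by push_cast; field_simp
      simp only [t, h₁, h₂, hθ, S_eval_two_mul_cos_pi_div_eq_zero (by omega : 2 ≤ q), zero_mul,
        and_self]
    · have h₁ : ((2 * q + 1 : ℕ) - 1 : ℤ) / 2 = q := by omega
      have h₂ : ((2 * q + 1 : ℕ) - 3 : ℤ) / 2 = q - 1 := by omega
      have h₃ : ((2 * q + 1 : ℕ) : ℤ) / 2 = q := by omega
      have h₄ : ((2 * q + 1 : ℕ) - 2 : ℤ) / 2 = q - 1 := by omega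
      have := S_eval_add_S_eval_two_mul_cos_eq_zero (by omega : 1 ≤ q)
      simp only [t, h₁, h₂, h₃, h₄]
      push_cast
      simp only [this, mul_zero, and_self]
  apply LinearEquiv.toLinearMap_injective
  rw [Module.reflection_mul_reflection_pow hf hg m t ht, hcoeffs.1, hcoeffs.2]
  simp

end

namespace CoxeterMatrix

variable {B : Type*} (M : CoxeterMatrix B)

open Real

/-- Twice the Tits form on simple roots, `2 B(α_c, α_d) = -2 cos (π / m)`, where `m = 0` stands
for `m = ∞` and gives `-2`. -/
noncomputable def cosGram (c d : B) : ℝ := if M c d = 0 then -2 else -2 * cos (π / M c d)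

theorem cosGram_self (c : B) : M.cosGram c c = 2 := by
  simp [cosGram]

theorem cosGram_comm (c d : B) : M.cosGram c d = M.cosGram d c := by
  rw [cosGram, cosGram, M.symmetric]

theorem cosGram_ne_zero {c d : B} (hcd : c ≠ d) (h2 : M c d ≠ 2) : M.cosGram c d ≠ 0 := by
  have h1 : M c d ≠ 1 := M.off_diagonal c d hcd
  unfold cosGram
  split_ifs with h0
  · norm_num
  · have hm : (2 : ℝ) < M c d := by exact_mod_cast (by omega : 2 < M c d)
    have hpos : 0 < π / M c d := div_pos pi_pos (by linarith)
    have : 0 < cos (π / M c d) :=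
      cos_pos_of_mem_Ioo ⟨by linarith [pi_pos], div_lt_div_of_pos_left pi_pos two_pos hm⟩
    positivity

noncomputable def coroot (c : B) : Module.Dual ℝ (B →₀ ℝ) :=
  Finsupp.linearCombination ℝ (M.cosGram · c)

theorem coroot_single (c d : B) (a : ℝ) :
    M.coroot c (Finsupp.single d a) = a * M.cosGram d c := by
  simp [coroot]

noncomputable def geomReflection (c : B) : (B →₀ ℝ) ≃ₗ[ℝ] (B →₀ ℝ) :=
  Module.reflection <| show M.coroot c (Finsupp.single c 1) = 2 by
    rw [coroot_single, one_mul, cosGram_self]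

theorem geomReflection_apply (c : B) (x : B →₀ ℝ) :
    M.geomReflection c x = x - M.coroot c x • Finsupp.single c 1 :=
  Module.reflection_apply ..

theorem isLiftable_geomReflection : M.IsLiftable M.geomReflection := by
  intro c d
  rcases eq_or_ne c d with rfl | hcd
  · ext1 x
    simp [geomReflection, Module.involutive_reflection _ x]
  obtain h0 | h2 | hm : M c d = 0 ∨ M c d = 2 ∨ 3 ≤ M c d := by
    have := M.off_diagonal c d hcd; omega
  · simp [h0]
  · have hγ : M.cosGram c d = 0 := by simp [cosGram, h2]
    have hγ' : M.cosGram d c = 0 := by rw [← cosGram_comm, hγ]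
    ext1 x
    simp only [h2, sq, LinearEquiv.mul_apply, geomReflection_apply, map_sub, map_smul,
      coroot_single, hγ, hγ', cosGram_self, LinearEquiv.coe_one, id]
    module
  · refine Module.reflection_mul_reflection_pow_eq_one _ _ hm ?_
    rw [coroot_single, coroot_single, one_mul, one_mul, cosGram_comm, cosGram, if_neg (by omega)]
    ring

theorem SameComponent.eq_of_forall_ne_eq_two {i j : B} (h : ∀ k ≠ i, M i k = 2)
    (hij : M.SameComponent i j) : j = i := by
  have hequiv : Equivalence (fun a b : B ↦ (a = i ↔ b = i)) :=
    ⟨fun _ ↦ Iff.rfl, Iff.symm, Iff.trans⟩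
  have hle : (fun a b : B ↦ a ≠ b ∧ M a b ≠ 2) ≤ (fun a b ↦ (a = i ↔ b = i)) := by
    rintro a b ⟨hab, hM⟩
    constructor
    · rintro rfl; exact absurd (h b (Ne.symm hab)) hM
    · rintro rfl; exact absurd (M.symmetric a b ▸ h a hab) hM
  exact ((hequiv.eqvGen_iff).mp (Relation.EqvGen.mono hle _ _ hij)).mp rfl

end CoxeterMatrix

theorem mul_mul_inv_eq_iff {G : Type*} [Group G] {g t u : G} :
    g * t * g⁻¹ = u ↔ t = g⁻¹ * u * g := by
  constructor <;> rintro rfl <;> group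

namespace CoxeterSystem

open List

variable {B W : Type*} [Group W] {M : CoxeterMatrix B} (cs : CoxeterSystem M W)

local prefix:100 "s" => cs.simple
local prefix:100 "π" => cs.wordProd
local prefix:100 "ℓ" => cs.length
local prefix:100 "ris" => cs.rightInvSeq
local prefix:100 "lis" => cs.leftInvSeq

theorem inv_simple_mul_simple_pow_mul (i j : B) (n : ℕ) :
    ((s i * s j) ^ n)⁻¹ * s j = s j * (s i * s j) ^ n := by
  have h : s j * (s i * s j) * (s j)⁻¹ = (s i * s j)⁻¹ := by
    simp [cs.inv_simple, mul_assoc]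
  rw [← inv_pow, ← h, conj_pow, cs.inv_simple, mul_assoc, cs.simple_mul_simple_self, mul_one]

section SignRepresentation

variable [DecidableEq W]

def signPerm (i : B) : Equiv.Perm (W × ZMod 2) :=
  Function.Involutive.toPerm (fun p ↦ (s i * p.1 * s i, p.2 + if p.1 = s i then 1 else 0)) <| by
    rintro ⟨t, ε⟩
    have h : s i * t * s i = s i ↔ t = s i := by
      simpa [cs.inv_simple] using mul_mul_inv_eq_iff (g := s i) (t := t) (u := s i)
    simp [h, ← mul_assoc, add_assoc, CharTwo.add_self_eq_zero]

theorem signPerm_apply (i : B) (t : W) (ε : ZMod 2) :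
    cs.signPerm i (t, ε) = (s i * t * s i, ε + if t = s i then 1 else 0) := rfl

theorem signPerm_mul_signPerm_pow_apply (i j : B) (n : ℕ) (t : W) (ε : ZMod 2) :
    ((cs.signPerm i * cs.signPerm j) ^ n) (t, ε) =
      ((s i * s j) ^ n * t * ((s i * s j) ^ n)⁻¹,
        ε + ∑ k ∈ Finset.range (2 * n), if t = s j * (s i * s j) ^ k then (1 : ZMod 2) else 0) := by
  induction n with
  | zero => simp
  | succ n ih =>
    set x := s i * s j
    have h₁ : x ^ n * t * (x ^ n)⁻¹ = s j ↔ t = s j * x ^ (2 * n) := by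
      rw [mul_mul_inv_eq_iff, cs.inv_simple_mul_simple_pow_mul, mul_assoc, ← pow_add, two_mul]
    have h₂ : s j * (x ^ n * t * (x ^ n)⁻¹) * s j = s i ↔ t = s j * x ^ (2 * n + 1) := by
      have e : s j * (x ^ n * t * (x ^ n)⁻¹) * s j = (s j * x ^ n) * t * (s j * x ^ n)⁻¹ := by
        simp [mul_assoc, cs.inv_simple]
      rw [e, mul_mul_inv_eq_iff]
      suffices (s j * x ^ n)⁻¹ * s i * (s j * x ^ n) = s j * x ^ (2 * n + 1) by rw [this]
      calc (s j * x ^ n)⁻¹ * s i * (s j * x ^ n) = ((x ^ n)⁻¹ * s j) * x * x ^ n := by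
            simp [x, mul_assoc, cs.inv_simple]
        _ = s j * x ^ (2 * n + 1) := by
            rw [cs.inv_simple_mul_simple_pow_mul, mul_assoc, mul_assoc, ← pow_succ', ← pow_add,
              two_mul, add_assoc]
    rw [pow_succ', Equiv.Perm.mul_apply, ih, Equiv.Perm.mul_apply, signPerm_apply, signPerm_apply]
    rw [show 2 * (n + 1) = 2 * n + 1 + 1 by ring, Finset.sum_range_succ, Finset.sum_range_succ]
    simp only [h₁, h₂, Prod.mk.injEq]
    constructor
    · simp only [x, pow_succ', mul_inv_rev, cs.inv_simple, mul_assoc]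
    · ring

theorem isLiftable_signPerm : M.IsLiftable cs.signPerm := by
  intro i j
  ext1 ⟨t, ε⟩
  -- `(s i * s j) ^ M i j = 1`, so every term of the sum occurs twice
  rw [signPerm_mul_signPerm_pow_apply, cs.simple_mul_simple_pow, two_mul, Finset.sum_range_add]
  simp [pow_add, CharTwo.add_self_eq_zero]

def signRep : W →* Equiv.Perm (W × ZMod 2) :=
  cs.lift ⟨cs.signPerm, cs.isLiftable_signPerm⟩

theorem signRep_simple (i : B) : cs.signRep (s i) = cs.signPerm i :=
  cs.lift_apply_simple _ i

theorem signRep_wordProd (ω : List B) (t : W) (ε : ZMod 2) :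
    cs.signRep (π ω) (t, ε) = (π ω * t * (π ω)⁻¹, ε + (ris ω).count t) := by
  induction ω generalizing ε with
  | nil => simp
  | cons i ω ih =>
    have h : π ω * t * (π ω)⁻¹ = s i ↔ (π ω)⁻¹ * s i * π ω = t :=
      mul_mul_inv_eq_iff.trans eq_comm
    rw [cs.wordProd_cons, map_mul, Equiv.Perm.mul_apply, ih, signRep_simple,
      signPerm_apply, rightInvSeq, count_cons]
    simp only [h]
    simp [mul_assoc, cs.inv_simple, add_assoc]

/-- The parity of the number of occurrences of `t` in the right inversion sequence of any word
for `w`. -/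
def invParity (t w : W) : ZMod 2 := (cs.signRep w (t, 0)).2

theorem invParity_wordProd (t : W) (ω : List B) : cs.invParity t (π ω) = (ris ω).count t := by
  simp [invParity, signRep_wordProd]

theorem invParity_one (t : W) : cs.invParity t 1 = 0 := by
  simp [invParity]

theorem signRep_apply (w t : W) (ε : ZMod 2) :
    cs.signRep w (t, ε) = (w * t * w⁻¹, ε + cs.invParity t w) := by
  obtain ⟨ω, rfl⟩ := cs.wordProd_surjective w
  simp [invParity_wordProd, signRep_wordProd]

theorem invParity_mul (t v w : W) :
    cs.invParity t (v * w) = cs.invParity t w + cs.invParity (w * t * w⁻¹) v := by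
  show (cs.signRep (v * w) (t, 0)).2 = _
  rw [map_mul, Equiv.Perm.mul_apply, signRep_apply, signRep_apply, zero_add]

theorem invParity_self {t : W} (ht : cs.IsReflection t) : cs.invParity t t = 1 := by
  obtain ⟨u, k, rfl⟩ := ht
  have h₁ : cs.invParity (s k) (s k) = 1 := by
    simpa using cs.invParity_wordProd (s k) [k]
  have h₀ : cs.invParity (u * s k * u⁻¹) u⁻¹ + cs.invParity (s k) u = 0 := by
    have h := cs.invParity_mul (u * s k * u⁻¹) u u⁻¹
    rwa [mul_inv_cancel, invParity_one, show u⁻¹ * (u * s k * u⁻¹) * u⁻¹⁻¹ = s k by group,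
      eq_comm] at h
  rw [cs.invParity_mul _ (u * s k), show u⁻¹ * (u * s k * u⁻¹) * u⁻¹⁻¹ = s k by group,
    cs.invParity_mul _ u, h₁, show s k * s k * (s k)⁻¹ = s k by group]
  linear_combination h₀

theorem invParity_mul_self {t : W} (ht : cs.IsReflection t) (w : W) :
    cs.invParity t (w * t) = cs.invParity t w + 1 := by
  rw [invParity_mul, cs.invParity_self ht, ht.mul_self, one_mul, ht.inv, add_comm]

theorem mem_rightInvSeq_of_invParity_eq_one {t : W} {ω : List B}
    (h : cs.invParity t (π ω) = 1) : t ∈ ris ω := by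
  by_contra hmem
  simp [invParity_wordProd, count_eq_zero_of_not_mem hmem] at h

theorem isRightInversion_of_invParity_eq_one {t w : W}
    (h : cs.invParity t w = 1) : cs.IsRightInversion w t := by
  obtain ⟨ω, hω, rfl⟩ := cs.exists_isReduced w
  exact cs.isRightInversion_of_mem_rightInvSeq hω (cs.mem_rightInvSeq_of_invParity_eq_one h)

theorem isRightInversion_iff_invParity_eq_one {t w : W} :
    cs.IsRightInversion w t ↔ cs.invParity t w = 1 := by
  refine ⟨fun h ↦ ?_, cs.isRightInversion_of_invParity_eq_one⟩
  obtain h₀ | h₁ : cs.invParity t w = 0 ∨ cs.invParity t w = 1 := by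
    generalize cs.invParity t w = x
    revert x
    decide
  · have hwt : cs.IsRightInversion (w * t) t :=
      cs.isRightInversion_of_invParity_eq_one (by rw [cs.invParity_mul_self h.1, h₀, zero_add])
    rw [IsRightInversion, mul_assoc, h.1.mul_self, mul_one] at hwt
    exact absurd h.2 (lt_asymm hwt.2)
  · exact h₁

end SignRepresentation

theorem mem_rightInvSeq_of_isRightInversion {ω : List B} {t : W}
    (h : cs.IsRightInversion (π ω) t) : t ∈ ris ω := by
  classical
  exact cs.mem_rightInvSeq_of_invParity_eq_one (cs.isRightInversion_iff_invParity_eq_one.mp h)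

theorem mem_leftInvSeq_of_isLeftInversion {ω : List B} {t : W}
    (h : cs.IsLeftInversion (π ω) t) : t ∈ lis ω := by
  rw [← cs.isRightInversion_inv_iff, ← wordProd_reverse] at h
  simpa [rightInvSeq_reverse] using cs.mem_rightInvSeq_of_isRightInversion h

noncomputable def geomRep : W →* (B →₀ ℝ) ≃ₗ[ℝ] (B →₀ ℝ) :=
  cs.lift ⟨M.geomReflection, M.isLiftable_geomReflection⟩

theorem geomRep_simple (i : B) : cs.geomRep (s i) = M.geomReflection i :=
  cs.lift_apply_simple _ i

theorem geomRep_apply_apply_of_mem_closure {i : B} {w : W}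
    (hw : w ∈ Subgroup.closure (cs.simple '' {i}ᶜ)) (x : B →₀ ℝ) : cs.geomRep w x i = x i := by
  induction hw using Subgroup.closure_induction generalizing x with
  | mem _ hw =>
    obtain ⟨k, hk, rfl⟩ := hw
    simp [geomRep_simple, CoxeterMatrix.geomReflection_apply,
      Set.mem_compl_singleton_iff.mp hk]
  | one => simp
  | mul v w _ _ hv hw => rw [map_mul, LinearEquiv.mul_apply, hv, hw]
  | inv w _ hw => rw [← hw, map_inv, LinearEquiv.coe_inv, LinearEquiv.apply_symm_apply]

theorem simple_notMem_closure_compl (i : B) : s i ∉ Subgroup.closure (cs.simple '' {i}ᶜ) := by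
  intro h
  have := cs.geomRep_apply_apply_of_mem_closure h (Finsupp.single i 1)
  simp [geomRep_simple, CoxeterMatrix.geomReflection_apply, CoxeterMatrix.coroot_single,
    CoxeterMatrix.cosGram_self] at this

theorem simple_mul_simple_ne {i j : B} (hij : i ≠ j) (hM : M i j ≠ 2) :
    s i * s j ≠ s j * s i := by
  intro h
  -- the two sides send `single i 1` to vectors with `j`-coordinates `-cosGram i j`, `cosGram i j`
  have := congr_arg (fun w ↦ cs.geomRep w (Finsupp.single i 1) j) h
  simp [geomRep_simple, CoxeterMatrix.geomReflection_apply, CoxeterMatrix.coroot_single,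
    CoxeterMatrix.cosGram_self, hij.symm] at this
  exact M.cosGram_ne_zero hij hM (by linarith [M.cosGram_comm i j])

theorem mem_closure_of_mem_leftInvSeq {J : Set B} {ω : List B} (hω : ∀ k ∈ ω, k ∈ J) {t : W}
    (ht : t ∈ lis ω) : t ∈ Subgroup.closure (cs.simple '' J) := by
  induction ω generalizing t with
  | nil => simp at ht
  | cons k ω ih =>
    have hk : s k ∈ Subgroup.closure (cs.simple '' J) :=
      Subgroup.subset_closure ⟨k, hω k mem_cons_self, rfl⟩
    rw [leftInvSeq, mem_cons, mem_map] at ht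
    obtain rfl | ⟨u, hu, rfl⟩ := ht
    · exact hk
    · exact mul_mem (mul_mem hk (ih (fun k hk ↦ hω k (mem_cons_of_mem _ hk)) hu)) (inv_mem hk)

theorem isLeftInversion_of_forall_length_le {w₀ t : W} (hw₀ : ∀ w, ℓ w ≤ ℓ w₀)
    (ht : cs.IsReflection t) : cs.IsLeftInversion w₀ t :=
  ⟨ht, (hw₀ _).lt_of_ne (ht.length_mul_right_ne w₀)⟩

theorem eq_of_mem_leftInvSeq_concat {i : B} {ω : List B} (hi : i ∉ ω) {t : W}
    (ht : t ∈ lis (ω.concat i)) (htJ : t ∉ Subgroup.closure (cs.simple '' {i}ᶜ)) :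
    t = π ω * s i * (π ω)⁻¹ := by
  rw [leftInvSeq_concat, concat_eq_append, mem_append, mem_singleton] at ht
  refine ht.resolve_left fun h ↦ htJ (cs.mem_closure_of_mem_leftInvSeq ?_ h)
  rintro k hk rfl
  exact hi hk

theorem mem_of_wordProd_eq_mul_simple {w₀ : W} (hw₀ : ∀ w, ℓ w ≤ ℓ w₀) {i j : B} (hij : i ≠ j)
    (hM : M i j ≠ 2) {ω : List B} (hω : π ω = w₀ * s i) : i ∈ ω := by
  by_contra hi
  have hw₀ω : π (ω.concat i) = w₀ := by
    rw [wordProd_concat, hω, mul_assoc, simple_mul_simple_self, mul_one]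
  have hout : ∀ t, cs.IsReflection t → t ∉ Subgroup.closure (cs.simple '' {i}ᶜ) →
      t = π ω * s i * (π ω)⁻¹ := fun t ht htJ ↦
    cs.eq_of_mem_leftInvSeq_concat hi (cs.mem_leftInvSeq_of_isLeftInversion
      (hw₀ω ▸ cs.isLeftInversion_of_forall_length_le hw₀ ht)) htJ
  have hj : s j ∈ Subgroup.closure (cs.simple '' {i}ᶜ) :=
    Subgroup.subset_closure ⟨j, hij.symm, rfl⟩
  have hi' := hout (s i) (cs.isReflection_simple i) (cs.simple_notMem_closure_compl i)
  have hji := hout (s j * s i * s j)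
    (by simpa [inv_simple] using (cs.isReflection_simple i).conj (s j))
    fun h ↦ cs.simple_notMem_closure_compl i (by simpa [mul_assoc] using mul_mem (mul_mem hj h) hj)
  apply cs.simple_mul_simple_ne hij hM
  calc s i * s j = s j * s i * s j * s j := by rw [hji, ← hi']
    _ = s j * s i := by simp [mul_assoc]

theorem bruhatLE_wordProd_of_sublist {ω ω' : List B} (hω : cs.IsReduced ω) (h : ω'.Sublist ω) :
    cs.bruhatLE (cs.wordProd ω') (cs.wordProd ω) :=
  ⟨ω, hω, rfl, ω', h, rfl⟩

theorem exists_ne_coxeterMatrix_ne_two {i : B}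
    (h : ∀ l : List B, l.Nodup → (∀ j : B, j ∈ l ↔ M.SameComponent i j) →
      3 ≤ orderOf (cs.wordProd l)) :
    ∃ j ≠ i, M i j ≠ 2 := by
  by_contra! hi
  have h₃ := h [i] (nodup_singleton i) fun j ↦
    ⟨fun hj ↦ mem_singleton.1 hj ▸ Relation.EqvGen.refl _,
      fun hj ↦ mem_singleton.2 (CoxeterMatrix.SameComponent.eq_of_forall_ne_eq_two M hi hj)⟩
  have h₂ := orderOf_le_of_pow_eq_one two_pos (cs.simple_sq i)
  rw [wordProd_singleton] at h₃
  omega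

end CoxeterSystem

theorem fat_ideal_contains_length_le_one_general {B W : Type*} [Group W]
    {M : CoxeterMatrix B} (cs : CoxeterSystem M W)
    (hCox : ∀ i : B, ∀ l : List B, l.Nodup →
      (∀ j : B, j ∈ l ↔ M.SameComponent i j) → 3 ≤ orderOf (cs.wordProd l))
    (w₀ : W) (hw₀max : ∀ w : W, cs.length w ≤ cs.length w₀)
    (I : Set W)
    (hIdeal : ∀ x y : W, cs.bruhatLE x y → y ∈ I → x ∈ I)
    (hFat : (fun w => w₀ * w) '' Iᶜ ⊆ I) :
    ∀ w : W, cs.length w ≤ 1 → w ∈ I := by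
  have hone : (1 : W) ∈ I := by
    by_contra h
    obtain ⟨ω, hω, rfl⟩ := cs.exists_isReduced w₀
    exact h (hIdeal _ _ (cs.bruhatLE_wordProd_of_sublist hω (List.nil_sublist ω))
      (hFat ⟨1, h, mul_one _⟩))
  have hsimple : ∀ i, cs.simple i ∈ I := by
    intro i
    by_contra hi
    obtain ⟨j, hji, hM⟩ := cs.exists_ne_coxeterMatrix_ne_two (hCox i)
    obtain ⟨ω, hω, hπ⟩ := cs.exists_isReduced (w₀ * cs.simple i)
    have hiω := cs.mem_of_wordProd_eq_mul_simple hw₀max hji.symm hM hπ.symm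
    have hle := cs.bruhatLE_wordProd_of_sublist hω (List.singleton_sublist.2 hiω)
    rw [cs.wordProd_singleton, ← hπ] at hle
    exact hi (hIdeal _ _ hle (hFat ⟨_, hi, rfl⟩))
  intro w hw
  obtain h₀ | h₁ := Nat.le_one_iff_eq_zero_or_eq_one.mp hw
  · rwa [cs.length_eq_zero_iff.mp h₀]
  · obtain ⟨i, rfl⟩ := cs.length_eq_one_iff.mp h₁
    exact hsimple i

/-- Let `(W, S)` be a finite Coxeter system, each of whose irreducible
factors has Coxeter number at least `3` (the Coxeter number of an irreducible component is
the order of the product of all the simple reflections of that component, taken in any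
order).  Then every fat ideal `I` of the Bruhat order on `W` contains every element of
length at most `1`. -/
theorem fat_ideal_contains_length_le_one {B W : Type*} [Group W] [Finite W] [Finite B]
    {M : CoxeterMatrix B} (cs : CoxeterSystem M W)
    (hCox : ∀ i : B, ∀ l : List B, l.Nodup →
      (∀ j : B, j ∈ l ↔ M.SameComponent i j) → 3 ≤ orderOf (cs.wordProd l))
    (w₀ : W) (hw₀max : ∀ w : W, cs.length w ≤ cs.length w₀)
    (hw₀uniq : ∀ w : W, cs.length w = cs.length w₀ → w = w₀)
    (I : Set W)
    (hIdeal : ∀ x y : W, cs.bruhatLE x y → y ∈ I → x ∈ I)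
    (hFat : (fun w => w₀ * w) '' Iᶜ ⊆ I) :
    ∀ w : W, cs.length w ≤ 1 → w ∈ I :=
  fat_ideal_contains_length_le_one_general cs hCox w₀ hw₀max I hIdeal hFat
end

section
/- Let n >= 2 and 1 <= k <= n-1. The permutation z_k in S_n has exactly (n-1)(n-2)/2 inversions; that is, l(z_k) = (n-1)(n-2)/2, independently of k. -/
/-- `ap σ i` is the value, in one-indexed notation, of the permutation `σ ∈ Sₙ` at the
one-indexed position `i`; i.e. writing `σ` as the tuple `(σ(1), …, σ(n))` of elements of
`{1, …, n}`, `ap σ i = σ(i)` for `1 ≤ i ≤ n` (and junk value `0` otherwise). -/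
def ap {n : ℕ} (σ : Equiv.Perm (Fin n)) (i : ℕ) : ℕ :=
  if h : 1 ≤ i ∧ i ≤ n then (σ ⟨i - 1, by omega⟩ : ℕ) + 1 else 0

/-- The number of inversions of a permutation in `Sₙ`, which equals its Coxeter length
with respect to the generating set of adjacent transpositions. -/
def invCount {n : ℕ} (σ : Equiv.Perm (Fin n)) : ℕ :=
  (Finset.univ.filter fun p : Fin n × Fin n => p.1 < p.2 ∧ σ p.2 < σ p.1).card

/-- A permutation is an adjacent transposition `sᵢ = (i, i+1)`. -/
def IsAdjSwap {n : ℕ} (σ : Equiv.Perm (Fin n)) : Prop :=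
  ∃ i j : Fin n, (i : ℕ) + 1 = (j : ℕ) ∧ σ = Equiv.swap i j

/-- A word in the adjacent transpositions. -/
def IsWord {n : ℕ} (l : List (Equiv.Perm (Fin n))) : Prop := ∀ τ ∈ l, IsAdjSwap τ

/-- A reduced word: a word in the adjacent transpositions of minimal length among all
words representing the same permutation. -/
def IsReducedWord {n : ℕ} (l : List (Equiv.Perm (Fin n))) : Prop :=
  IsWord l ∧ ∀ l' : List (Equiv.Perm (Fin n)), IsWord l' → l'.prod = l.prod →
    l.length ≤ l'.length

/-- The Bruhat order on `Sₙ`: `x ≤ y` iff `x` is the product of a subword of some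
reduced word for `y` in the adjacent transpositions. -/
def bruhatLE {n : ℕ} (x y : Equiv.Perm (Fin n)) : Prop :=
  ∃ l : List (Equiv.Perm (Fin n)), IsReducedWord l ∧ l.prod = y ∧
    ∃ l' : List (Equiv.Perm (Fin n)), l'.Sublist l ∧ l'.prod = x

/-- The one-indexed tuple of the permutation `z_k ∈ Sₙ`, namely `(k, …, k+1)` where the
middle entries are the elements of `{1, …, n} \ {k, k+1}` in decreasing order:
`z_k(1) = k`, `z_k(n) = k+1`, `z_k(i) = n-i+2` for `1 < i ≤ n-k`, and `z_k(i) = n-i`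
for `n-k < i < n`. -/
def zVal (n k i : ℕ) : ℕ :=
  if i = 1 then k else if i = n then k + 1 else if i ≤ n - k then n - i + 2 else n - i

/-!
Read the inversions of `z_k` row by row: row `i` counts the later positions holding a smaller
value. Between the first and last positions `z_k` is decreasing, so a middle row `i` has the
`n - 1 - i` inversions of a decreasing sequence, plus one more when `i ≤ n - k` (the final
entry `k + 1` is then smaller); the first row has `k - 1` instead of `n - 2`, and the last row
none. The `n - k - 1` surplus of the middle rows makes up exactly the deficit of the first
row, so the total is `∑ (n - 1 - i) = (n - 1)(n - 2)/2`.
-/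

open Finset

lemma card_filter_product_eq_sum {α β : Type*} (s : Finset α) (t : Finset β) (r : α → β → Prop)
    [∀ a b, Decidable (r a b)] :
    #{p ∈ s ×ˢ t | r p.1 p.2} = ∑ a ∈ s, #{b ∈ t | r a b} := by
  simp only [card_filter, sum_product]

lemma ap_succ {n : ℕ} (σ : Equiv.Perm (Fin n)) (i : Fin n) : ap σ (i + 1) = σ i + 1 := by
  simp [ap]

lemma invCount_eq_card_ap {n : ℕ} (σ : Equiv.Perm (Fin n)) :
    invCount σ = #{p ∈ Icc 1 n ×ˢ Icc 1 n | p.1 < p.2 ∧ ap σ p.2 < ap σ p.1} := by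
  refine card_bij (fun p _ => ((p.1 : ℕ) + 1, (p.2 : ℕ) + 1)) ?_ ?_ ?_
  · rintro ⟨i, j⟩ h
    simp only [mem_filter, mem_univ, true_and, Fin.lt_def] at h
    simp only [mem_filter, mem_product, mem_Icc, ap_succ]
    omega
  · rintro ⟨i, j⟩ - ⟨i', j'⟩ - h
    simp only [Prod.mk.injEq, add_left_inj, Fin.val_inj] at h
    rw [h.1, h.2]
  · rintro ⟨a, b⟩ h
    simp only [mem_filter, mem_product, mem_Icc] at h
    obtain ⟨⟨⟨ha1, ha2⟩, hb1, hb2⟩, hab, hlt⟩ := h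
    refine ⟨(⟨a - 1, by omega⟩, ⟨b - 1, by omega⟩), ?_, by simp only [Prod.mk.injEq]; omega⟩
    have ha := ap_succ σ ⟨a - 1, by omega⟩
    have hb := ap_succ σ ⟨b - 1, by omega⟩
    simp only [Nat.sub_add_cancel ha1, Nat.sub_add_cancel hb1] at ha hb
    simp only [mem_filter, mem_univ, true_and, Fin.lt_def]
    omega

lemma card_zVal_row {n k i : ℕ} (hk1 : 1 ≤ k) (hk2 : k ≤ n - 1) (hi : i ∈ Icc 1 n) :
    #{j ∈ Icc 1 n | i < j ∧ zVal n k j < zVal n k i} + (if i = 1 then n - k - 1 else 0) =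
      (n - 1 - i) + (if 2 ≤ i ∧ i ≤ n - k then 1 else 0) := by
  rw [mem_Icc] at hi
  have row_eq : ∀ s : Finset ℕ, (∀ j, j ∈ s ↔ 1 ≤ j ∧ j ≤ n ∧ i < j ∧ zVal n k j < zVal n k i) →
      {j ∈ Icc 1 n | i < j ∧ zVal n k j < zVal n k i} = s := by
    intro s hs
    ext j
    simp only [mem_filter, mem_Icc, hs, and_assoc]
  by_cases h1 : i = 1
  · rw [row_eq (Ioc (n - k) (n - 1)) (by intro j; simp only [mem_Ioc, zVal]; split_ifs <;> omega),
      Nat.card_Ioc]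
    split_ifs <;> omega
  by_cases hmid : i ≤ n - k
  · rw [row_eq (Ioc i n) (by intro j; simp only [mem_Ioc, zVal]; split_ifs <;> omega),
      Nat.card_Ioc]
    split_ifs <;> omega
  · rw [row_eq (Ioo i n) (by intro j; simp only [mem_Ioo, zVal]; split_ifs <;> omega),
      Nat.card_Ioo]
    split_ifs <;> omega

lemma sum_Icc_sub_one_sub (n : ℕ) : ∑ i ∈ Icc 1 n, (n - 1 - i) = (n - 1) * (n - 2) / 2 := by
  have reflect : ∑ i ∈ Icc 1 n, (n - 1 - i) = ∑ t ∈ range n, (t - 1) := by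
    refine sum_nbij' (n - ·) (n - ·) ?_ ?_ ?_ ?_ ?_ <;>
      · intro i hi
        simp only [mem_Icc, mem_range] at hi ⊢
        omega
  rw [reflect]
  rcases n with _ | m
  · rfl
  · simp [sum_range_succ', sum_range_id]

lemma card_zVal_inversions {n k : ℕ} (hk1 : 1 ≤ k) (hk2 : k ≤ n - 1) :
    #{p ∈ Icc 1 n ×ˢ Icc 1 n | p.1 < p.2 ∧ zVal n k p.2 < zVal n k p.1} =
      (n - 1) * (n - 2) / 2 := by
  have rows := sum_congr rfl fun i hi => card_zVal_row hk1 hk2 hi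
  have hmid : {i ∈ Icc 1 n | 2 ≤ i ∧ i ≤ n - k} = Icc 2 (n - k) := by
    ext i; simp only [mem_filter, mem_Icc]; omega
  simp only [sum_add_distrib, sum_Icc_sub_one_sub, sum_ite_eq', sum_boole, hmid, Nat.card_Icc,
    Nat.cast_id, mem_Icc] at rows
  rw [card_filter_product_eq_sum (r := fun i j => i < j ∧ zVal n k j < zVal n k i)]
  split_ifs at rows <;> omega

theorem zk_length_general (n k : ℕ) (hk1 : 1 ≤ k) (hk2 : k ≤ n - 1)
    (z : Equiv.Perm (Fin n))
    (hz : ∀ i : ℕ, 1 ≤ i → i ≤ n → ap z i = zVal n k i) :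
    invCount z = (n - 1) * (n - 2) / 2 := by
  rw [invCount_eq_card_ap, ← card_zVal_inversions hk1 hk2]
  congr 1
  refine filter_congr fun p hp => ?_
  simp only [mem_product, mem_Icc] at hp
  rw [hz p.1 hp.1.1 hp.1.2, hz p.2 hp.2.1 hp.2.2]

/-- Let `n ≥ 2` and `1 ≤ k ≤ n - 1`.  The permutation `z_k ∈ Sₙ` has
exactly `(n-1)(n-2)/2` inversions, i.e. `ℓ(z_k) = (n-1)(n-2)/2`, independently of `k`. -/
theorem zk_length (n k : ℕ) (hn : 2 ≤ n) (hk1 : 1 ≤ k) (hk2 : k ≤ n - 1)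
    (z : Equiv.Perm (Fin n))
    (hz : ∀ i : ℕ, 1 ≤ i → i ≤ n → ap z i = zVal n k i) :
    invCount z = (n - 1) * (n - 2) / 2 :=
  zk_length_general n k hk1 hk2 z hz
end

section
/- Let n >= 1 and let lambda be the permutation in S_{2n} defined by lambda(i) = 2n+1-i for 1 <= i <= n-1, lambda(i) = 2n-i for n <= i <= 2n-1, and lambda(2n) = n+1. Then for every w in S_{2n}: w <= lambda in the Bruhat order if and only if w(2n) >= n+1. Consequently the set I_{2n} := { w in S_{2n} : w(2n) > n } equals the principal ideal { w : w <= lambda } (so it is an ideal), and it is balanced: w_0 * (S_{2n} \ I_{2n}) = I_{2n}, where w_0(i) = 2n+1-i. -/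
/-- The one-indexed tuple of the permutation `λ ∈ S₂ₙ`, namely
`(2n, 2n-1, …, n+2, n, n-1, …, 2, 1, n+1)`: `λ(i) = 2n+1-i` for `1 ≤ i ≤ n-1`,
`λ(i) = 2n-i` for `n ≤ i ≤ 2n-1`, and `λ(2n) = n+1`. -/
def lamVal (n i : ℕ) : ℕ :=
  if i ≤ n - 1 then 2 * n + 1 - i else if i ≤ 2 * n - 1 then 2 * n - i else n + 1

open Equiv Finset

section Length

variable {N : ℕ}

lemma val_swap_apply (u v a : Fin N) :
    (swap u v a : ℕ) = if (a : ℕ) = u then (v : ℕ) else if (a : ℕ) = v then (u : ℕ) else a := by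
  simp only [swap_apply_def, Fin.val_inj]
  split_ifs <;> rfl

lemma invCount_one : invCount (1 : Perm (Fin N)) = 0 :=
  card_eq_zero.2 (filter_eq_empty_iff.2 fun _ _ h => lt_asymm h.1 h.2)

lemma invCount_swap_mul_of_lt {u v : Fin N} (huv : (u : ℕ) + 1 = v) {x : Perm (Fin N)}
    (hx : x⁻¹ u < x⁻¹ v) : invCount (swap u v * x) = invCount x + 1 := by
  -- Since `u` and `v` are adjacent values, swapping them changes the relative order of the
  -- values at two positions only when these are the positions of `u` and `v`.
  have hset : univ.filter (fun p : Fin N × Fin N => p.1 < p.2 ∧ (swap u v * x) p.2 <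
      (swap u v * x) p.1) =
        insert (x⁻¹ u, x⁻¹ v) (univ.filter fun p => p.1 < p.2 ∧ x p.2 < x p.1) := by
    have hval : ∀ a w, a = x⁻¹ w ↔ (x a : ℕ) = w := fun a w => by
      rw [Perm.eq_inv_iff_eq, Fin.ext_iff]
    have hpos : ∀ a b, (x a : ℕ) = u → (x b : ℕ) = v → (a : ℕ) < b := fun a b ha hb => by
      rwa [(hval a u).2 ha, (hval b v).2 hb]
    ext ⟨p, q⟩
    have hinj : (x p : ℕ) = x q → (p : ℕ) = q := fun h => by rw [x.injective (Fin.ext h)]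
    have := hpos p q
    have := hpos q p
    simp only [mem_filter, mem_univ, true_and, mem_insert, Prod.mk.injEq, hval,
      Perm.mul_apply, Fin.lt_def, val_swap_apply]
    split_ifs <;> omega
  rw [invCount, invCount, hset, card_insert_of_notMem]
  simp only [mem_filter, mem_univ, true_and, Perm.coe_inv, apply_symm_apply, not_and, not_lt]
  exact fun _ => Fin.le_def.2 (by omega)

lemma invCount_swap_mul_of_gt {u v : Fin N} (huv : (u : ℕ) + 1 = v) {x : Perm (Fin N)}
    (hx : x⁻¹ v < x⁻¹ u) : invCount (swap u v * x) + 1 = invCount x := by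
  have h := invCount_swap_mul_of_lt huv (x := swap u v * x)
    (by simpa [mul_inv_rev, swap_inv] using hx)
  rwa [swap_mul_self_mul, eq_comm] at h

lemma inv_apply_lt_or_gt {u v : Fin N} (huv : (u : ℕ) + 1 = v) (x : Perm (Fin N)) :
    x⁻¹ u < x⁻¹ v ∨ x⁻¹ v < x⁻¹ u :=
  lt_or_gt_of_ne (x⁻¹.injective.ne (Fin.ne_of_val_ne (by omega)))

lemma exists_descent {x : Perm (Fin N)} (hx : x ≠ 1) :
    ∃ u v : Fin N, (u : ℕ) + 1 = v ∧ x⁻¹ v < x⁻¹ u := by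
  by_contra! h
  obtain _ | M := N
  · exact hx (Subsingleton.elim _ _)
  have hmono : StrictMono ⇑x⁻¹ := Fin.strictMono_iff_lt_succ.2 fun i =>
    (h _ _ rfl).lt_of_ne (x⁻¹.injective.ne (Fin.castSucc_lt_succ (i := i)).ne)
  exact hx (inv_eq_one.1 (Perm.ext fun a => hmono.apply_eq))

lemma exists_word_length_eq_invCount (x : Perm (Fin N)) :
    ∃ l : List (Perm (Fin N)), IsWord l ∧ l.prod = x ∧ l.length = invCount x := by
  by_cases hx : x = 1
  · exact ⟨[], by simp [IsWord], by simp [hx], by simp [hx, invCount_one]⟩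
  obtain ⟨u, v, huv, hdesc⟩ := exists_descent hx
  have hlen := invCount_swap_mul_of_gt huv hdesc
  obtain ⟨l, hl, hprod, hlength⟩ := exists_word_length_eq_invCount (swap u v * x)
  refine ⟨swap u v :: l, List.forall_mem_cons.2 ⟨⟨u, v, huv, rfl⟩, hl⟩, ?_, ?_⟩
  · rw [List.prod_cons, hprod, swap_mul_self_mul]
  · rw [List.length_cons, hlength, hlen]
termination_by invCount x
decreasing_by omega

lemma invCount_prod_le_length {l : List (Perm (Fin N))} (hl : IsWord l) :
    invCount l.prod ≤ l.length := by
  induction l with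
  | nil => simp [invCount_one]
  | cons t r ih =>
    obtain ⟨⟨u, v, huv, rfl⟩, hr⟩ := List.forall_mem_cons.1 hl
    have := ih hr
    rw [List.prod_cons, List.length_cons]
    rcases inv_apply_lt_or_gt huv r.prod with h | h
    · rw [invCount_swap_mul_of_lt huv h]; omega
    · have := invCount_swap_mul_of_gt huv h; omega

lemma isReducedWord_iff {l : List (Perm (Fin N))} :
    IsReducedWord l ↔ IsWord l ∧ l.length = invCount l.prod := by
  refine ⟨fun ⟨hw, hmin⟩ => ⟨hw, le_antisymm ?_ (invCount_prod_le_length hw)⟩,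
    fun ⟨hw, hlen⟩ => ⟨hw, fun l' hl' hprod => ?_⟩⟩
  · obtain ⟨l', hl', hprod, hlength⟩ := exists_word_length_eq_invCount l.prod
    exact hlength ▸ hmin l' hl' hprod
  · exact hlen ▸ hprod ▸ invCount_prod_le_length hl'

lemma isReducedWord_swap_cons_iff {u v : Fin N} (huv : (u : ℕ) + 1 = v)
    {l : List (Perm (Fin N))} :
    IsReducedWord (swap u v :: l) ↔ IsReducedWord l ∧ l.prod⁻¹ u < l.prod⁻¹ v := by
  have hword : IsWord (swap u v :: l) ↔ IsWord l :=
    List.forall_mem_cons.trans (and_iff_right ⟨u, v, huv, rfl⟩)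
  simp only [isReducedWord_iff, hword, List.length_cons, List.prod_cons]
  rcases inv_apply_lt_or_gt huv l.prod with h | h
  · simp only [h, and_true, invCount_swap_mul_of_lt huv h, add_left_inj]
  · have hlen := invCount_swap_mul_of_gt huv h
    simp only [not_lt_of_gt h, and_false, iff_false, not_and]
    intro hl
    have := invCount_prod_le_length hl
    omega

end Length

section RankCriterion

variable {N : ℕ}

/-- Björner–Brenti's `x[k, m]` in 0-indexed form. -/
def highCount (x : Perm (Fin N)) (k m : ℕ) : ℕ :=
  #{a : Fin N | (a : ℕ) < k ∧ m ≤ (x a : ℕ)}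

def RankLE (x y : Perm (Fin N)) : Prop :=
  ∀ k m, highCount x k m ≤ highCount y k m

lemma highCount_eq_add_ite (x : Perm (Fin N)) (k : ℕ) (v : Fin N) :
    highCount x k v = highCount x k (v + 1) + if (x⁻¹ v : ℕ) < k then 1 else 0 := by
  have hval : ∀ a, a ≠ x⁻¹ v → (x a : ℕ) ≠ v := fun a ha h =>
    ha (Perm.eq_inv_iff_eq.2 (Fin.ext h))
  unfold highCount
  split_ifs with hk
  · rw [← card_insert_of_notMem (a := x⁻¹ v) (by simp)]
    congr 1
    ext a
    rcases eq_or_ne a (x⁻¹ v) with rfl | ha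
    · simpa using hk
    · have := hval a ha
      simp only [mem_filter, mem_univ, true_and, mem_insert, ha, false_or]
      omega
  · rw [add_zero]
    congr 1
    ext a
    rcases eq_or_ne a (x⁻¹ v) with rfl | ha
    · simpa using hk
    · have := hval a ha
      simp only [mem_filter, mem_univ, true_and]
      omega

lemma highCount_swap_mul_of_ne {u v : Fin N} (huv : (u : ℕ) + 1 = v) (x : Perm (Fin N))
    (k : ℕ) {m : ℕ} (hm : m ≠ v) : highCount (swap u v * x) k m = highCount x k m := by
  unfold highCount
  congr 1
  refine filter_congr fun a _ => ?_
  simp only [Perm.mul_apply, val_swap_apply]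
  split_ifs <;> omega

lemma highCount_swap_mul_self {u v : Fin N} (huv : (u : ℕ) + 1 = v) (x : Perm (Fin N))
    (k : ℕ) : highCount (swap u v * x) k v =
      highCount x k (v + 1) + if (x⁻¹ u : ℕ) < k then 1 else 0 := by
  rw [highCount_eq_add_ite, highCount_swap_mul_of_ne huv x k (by omega)]
  simp [mul_inv_rev, swap_inv]

lemma highCount_eq_add_ite_add_ite (u v : Fin N) (huv : (u : ℕ) + 1 = v) (x : Perm (Fin N)) (k : ℕ) :
    highCount x k u = highCount x k (v + 1) + (if (x⁻¹ v : ℕ) < k then 1 else 0) +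
      if (x⁻¹ u : ℕ) < k then 1 else 0 := by
  rw [highCount_eq_add_ite x k u, huv, highCount_eq_add_ite x k v]

lemma rankLE_swap_mul {u v : Fin N} (huv : (u : ℕ) + 1 = v) {y : Perm (Fin N)}
    (hy : y⁻¹ u < y⁻¹ v) : RankLE y (swap u v * y) := by
  intro k m
  rcases eq_or_ne m v with rfl | hm
  · rw [highCount_swap_mul_self huv, highCount_eq_add_ite y k v]
    split_ifs <;> omega
  · rw [highCount_swap_mul_of_ne huv y k hm]

lemma RankLE.swap_mul {u v : Fin N} (huv : (u : ℕ) + 1 = v) {x y : Perm (Fin N)}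
    (hxy : RankLE x y) (h : y⁻¹ u < y⁻¹ v ∨ x⁻¹ v < x⁻¹ u) :
    RankLE (swap u v * x) (swap u v * y) := by
  intro k m
  rcases eq_or_ne m v with rfl | hm
  · have hu := hxy k u
    have hv := hxy k (v + 1)
    rw [highCount_eq_add_ite_add_ite u v huv x k, highCount_eq_add_ite_add_ite u v huv y k] at hu
    rw [highCount_swap_mul_self huv, highCount_swap_mul_self huv]
    split_ifs at hu ⊢ <;> omega
  · rw [highCount_swap_mul_of_ne huv x k hm, highCount_swap_mul_of_ne huv y k hm]
    exact hxy k m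

lemma RankLE.le_swap_mul {u v : Fin N} (huv : (u : ℕ) + 1 = v) {x y : Perm (Fin N)}
    (hxy : RankLE x y) (hx : x⁻¹ u < x⁻¹ v) :
    RankLE x (swap u v * y) := by
  intro k m
  rcases eq_or_ne m v with rfl | hm
  · have hu := hxy k u
    have hv := hxy k (v + 1)
    rw [highCount_eq_add_ite_add_ite u v huv x k, highCount_eq_add_ite_add_ite u v huv y k] at hu
    rw [highCount_swap_mul_self huv, highCount_eq_add_ite x k v]
    split_ifs at hu ⊢ <;> omega
  · rw [highCount_swap_mul_of_ne huv y k hm]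
    exact hxy k m

lemma RankLE.eq_one {x : Perm (Fin N)} (h : RankLE x 1) : x = 1 := by
  have hle : ∀ a : Fin N, (x a : ℕ) ≤ a := fun a => by
    by_contra! ha
    have hx : 0 < highCount x (a + 1) (a + 1) := card_pos.2 ⟨a, by simp only [mem_filter, mem_univ, true_and]; omega⟩
    have h1 : highCount (1 : Perm (Fin N)) (a + 1) (a + 1) = 0 :=
      card_eq_zero.2 <| filter_eq_empty_iff.2 fun b _ => by simp only [Perm.one_apply]; omega
    exact absurd (h (a + 1) (a + 1)) (by omega)
  have hsum : ∑ a, (x a : ℕ) = ∑ a : Fin N, (a : ℕ) := Equiv.sum_comp x fun a => (a : ℕ)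
  ext a
  exact (sum_eq_sum_iff_of_le fun a _ => hle a).1 hsum a (mem_univ a)

lemma rankLE_prod_of_sublist {l : List (Perm (Fin N))} (hl : IsReducedWord l)
    {l' : List (Perm (Fin N))} (h : l'.Sublist l) : RankLE l'.prod l.prod := by
  induction l generalizing l' with
  | nil => rw [List.sublist_nil.1 h]; exact fun _ _ => le_rfl
  | cons t r ih =>
    obtain ⟨u, v, huv, rfl⟩ := hl.1 t List.mem_cons_self
    obtain ⟨hr, hasc⟩ := (isReducedWord_swap_cons_iff huv).1 hl
    rw [List.prod_cons]
    rcases List.sublist_cons_iff.1 h with hsub | ⟨l'', rfl, hsub⟩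
    · exact fun k m => (ih hr hsub k m).trans (rankLE_swap_mul huv hasc k m)
    · rw [List.prod_cons]
      exact (ih hr hsub).swap_mul huv (Or.inl hasc)

lemma bruhatLE_of_rankLE {x y : Perm (Fin N)} (h : RankLE x y) : bruhatLE x y := by
  by_cases hy : y = 1
  · subst hy
    rw [h.eq_one]
    exact ⟨[], isReducedWord_iff.2 ⟨by simp [IsWord], by simp [invCount_one]⟩, rfl, [],
      List.Sublist.slnil, rfl⟩
  obtain ⟨u, v, huv, hdesc⟩ := exists_descent hy
  have hlen := invCount_swap_mul_of_gt huv hdesc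
  have hred : ∀ l : List (Perm (Fin N)), IsReducedWord l → l.prod = swap u v * y →
      IsReducedWord (swap u v :: l) ∧ (swap u v :: l).prod = y := fun l hl hprod => by
    refine ⟨(isReducedWord_swap_cons_iff huv).2 ⟨hl, ?_⟩, ?_⟩
    · simpa [hprod, mul_inv_rev, swap_inv] using hdesc
    · rw [List.prod_cons, hprod, swap_mul_self_mul]
  rcases inv_apply_lt_or_gt huv x with hx | hx
  · obtain ⟨l, hl, hprod, l', hsub, rfl⟩ := bruhatLE_of_rankLE (h.le_swap_mul huv hx)
    exact ⟨_, (hred l hl hprod).1, (hred l hl hprod).2, l', hsub.cons _, rfl⟩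
  · obtain ⟨l, hl, hprod, l', hsub, hprod'⟩ :=
      bruhatLE_of_rankLE (h.swap_mul huv (Or.inr hx))
    refine ⟨_, (hred l hl hprod).1, (hred l hl hprod).2, _, hsub.cons_cons _, ?_⟩
    rw [List.prod_cons, hprod', swap_mul_self_mul]
termination_by invCount y
decreasing_by all_goals omega

theorem bruhatLE_iff_rankLE {x y : Perm (Fin N)} : bruhatLE x y ↔ RankLE x y :=
  ⟨fun ⟨_, hl, hprod, _, hsub, hprod'⟩ => hprod ▸ hprod' ▸ rankLE_prod_of_sublist hl hsub,
    bruhatLE_of_rankLE⟩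

end RankCriterion

section Counting

variable {N : ℕ}

lemma card_filter_le_val (m : ℕ) : #{v : Fin N | m ≤ (v : ℕ)} = N - m := by
  have h := card_filter_add_card_filter_not (s := univ) fun v : Fin N => (v : ℕ) < m
  simp only [not_lt, card_univ, Fintype.card_fin, Fin.card_filter_val_lt] at h
  omega

lemma highCount_eq_card_values (x : Perm (Fin N)) (k m : ℕ) :
    highCount x k m = #{v : Fin N | m ≤ (v : ℕ) ∧ (x⁻¹ v : ℕ) < k} :=
  card_equiv x fun a => by simp [and_comm]

lemma highCount_le_left (x : Perm (Fin N)) (k m : ℕ) : highCount x k m ≤ k :=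
  calc highCount x k m ≤ #{a : Fin N | (a : ℕ) < k} :=
        card_le_card (monotone_filter_right _ fun _ _ h => h.1)
    _ ≤ k := Fin.card_filter_val_lt.trans_le (min_le_right _ _)

lemma highCount_le_sub (x : Perm (Fin N)) (k m : ℕ) : highCount x k m ≤ N - m := by
  rw [highCount_eq_card_values, ← card_filter_le_val m]
  exact card_le_card (monotone_filter_right _ fun _ _ h => h.1)

lemma highCount_of_le (x : Perm (Fin N)) {k : ℕ} (hk : N ≤ k) (m : ℕ) :
    highCount x k m = N - m := by
  rw [highCount_eq_card_values, ← card_filter_le_val m]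
  congr 1
  exact filter_congr fun v _ => and_iff_left (by omega)

lemma le_highCount (x : Perm (Fin N)) {k m c : ℕ} (hc : c ≤ N)
    (h : ∀ a : Fin N, (a : ℕ) < c → (a : ℕ) < k ∧ m ≤ (x a : ℕ)) : c ≤ highCount x k m :=
  calc c = #{a : Fin N | (a : ℕ) < c} := by rw [Fin.card_filter_val_lt]; omega
    _ ≤ highCount x k m := card_le_card (monotone_filter_right _ fun a _ => h a)

lemma highCount_le_sub_sub_one (x : Perm (Fin N)) {p : Fin N} {k m : ℕ} (hk : k ≤ p)
    (hm : m ≤ (x p : ℕ)) : highCount x k m ≤ N - m - 1 := by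
  rw [highCount_eq_card_values]
  calc _ ≤ #((univ.filter fun v : Fin N => m ≤ (v : ℕ)).erase (x p)) := card_le_card ?_
    _ = N - m - 1 := by rw [card_erase_of_mem (by simpa using hm), card_filter_le_val]
  intro v hv
  simp only [mem_filter, mem_univ, true_and, mem_erase] at hv ⊢
  refine ⟨?_, hv.1⟩
  rintro rfl
  simp only [Perm.coe_inv, symm_apply_apply] at hv
  omega

lemma highCount_last_of_lt {last : Fin N} (hlast : (last : ℕ) + 1 = N) (x : Perm (Fin N)) {m : ℕ}
    (hm : (x last : ℕ) < m) :
    highCount x last m = N - m := by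
  rw [highCount_eq_card_values, ← card_filter_le_val m]
  congr 1
  refine filter_congr fun v _ => and_iff_left_of_imp fun hv => ?_
  have hne : x⁻¹ v ≠ last := fun h => by rw [← h, Perm.coe_inv, apply_symm_apply] at hm; omega
  have := Fin.val_ne_of_ne hne
  omega

/-- `hy` says that the entries of `y` before the last one are the remaining values in
decreasing order. -/
theorem bruhatLE_iff_le_apply_last {last : Fin N} (hlast : (last : ℕ) + 1 = N) {y : Perm (Fin N)}
    (hy : ∀ a : Fin N, a ≠ last →
      (y a : ℕ) = if (a : ℕ) + y last + 1 < N then N - 1 - a else N - 2 - a)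
    (x : Perm (Fin N)) : bruhatLE x y ↔ y last ≤ x last := by
  rw [bruhatLE_iff_rankLE, Fin.le_def]
  constructor
  · intro h
    by_contra! hlt
    have := h last (y last)
    have := highCount_last_of_lt hlast x hlt
    have := highCount_le_sub_sub_one y (le_refl (last : ℕ)) le_rfl
    omega
  · intro hle k m
    rcases le_or_gt N k with hk | hk
    · rw [highCount_of_le x hk, highCount_of_le y hk]
    have := highCount_le_left x k m
    rcases le_or_gt m (y last) with hm | hm
    · have := highCount_le_sub_sub_one x (k := k) (by omega) (hm.trans hle)
      refine le_trans (by omega) (le_highCount y (c := min k (N - m - 1)) (by omega) ?_)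
      intro a ha
      rw [hy a (Fin.ne_of_val_ne (by omega))]
      split_ifs <;> omega
    · have := highCount_le_sub x k m
      refine le_trans (by omega) (le_highCount y (c := min k (N - m)) (by omega) ?_)
      intro a ha
      rw [hy a (Fin.ne_of_val_ne (by omega))]
      split_ifs <;> omega

end Counting

lemma ap_eq_of_val_add_one_eq {N : ℕ} (σ : Perm (Fin N)) {a : Fin N} {i : ℕ}
    (h : (a : ℕ) + 1 = i) : ap σ i = σ a + 1 := by
  subst h
  simp [ap]

lemma val_add_one_of_ap_eq {N : ℕ} {σ : Perm (Fin N)} {f : ℕ → ℕ}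
    (h : ∀ i : ℕ, 1 ≤ i → i ≤ N → ap σ i = f i) (a : Fin N) : (σ a : ℕ) + 1 = f (a + 1) := by
  rw [← ap_eq_of_val_add_one_eq σ rfl, h _ (by omega) a.2]

/-- Let `n ≥ 1` and let `λ ∈ S₂ₙ` be as above.  Then for every
`w ∈ S₂ₙ`: `w ≤ λ` in the Bruhat order iff `w(2n) ≥ n + 1`.  Consequently the set
`I₂ₙ = {w : w(2n) > n}` equals the principal ideal `{w : w ≤ λ}` (so it is an ideal), and
it is balanced: `w₀ * (S₂ₙ \ I₂ₙ) = I₂ₙ`, where `w₀(i) = 2n + 1 - i`. -/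
theorem principal_balanced_ideal (n : ℕ) (hn : 1 ≤ n)
    (lam : Equiv.Perm (Fin (2 * n)))
    (hlam : ∀ i : ℕ, 1 ≤ i → i ≤ 2 * n → ap lam i = lamVal n i)
    (w₀ : Equiv.Perm (Fin (2 * n)))
    (hw₀ : ∀ i : ℕ, 1 ≤ i → i ≤ 2 * n → ap w₀ i = 2 * n + 1 - i) :
    (∀ w : Equiv.Perm (Fin (2 * n)), bruhatLE w lam ↔ n + 1 ≤ ap w (2 * n)) ∧
    ({w : Equiv.Perm (Fin (2 * n)) | n < ap w (2 * n)} =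
        {w : Equiv.Perm (Fin (2 * n)) | bruhatLE w lam}) ∧
    ((fun x => w₀ * x) '' {w : Equiv.Perm (Fin (2 * n)) | n < ap w (2 * n)}ᶜ =
        {w : Equiv.Perm (Fin (2 * n)) | n < ap w (2 * n)}) := by
  let last : Fin (2 * n) := ⟨2 * n - 1, by omega⟩
  have hlast : (last : ℕ) + 1 = 2 * n := Nat.sub_add_cancel (by omega)
  have hap_last (w : Perm (Fin (2 * n))) := ap_eq_of_val_add_one_eq w hlast
  have hlam_val := val_add_one_of_ap_eq hlam
  have hw₀_val := val_add_one_of_ap_eq hw₀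
  have hlam_last : (lam last : ℕ) = n := by
    have := hlam_val last
    simp only [lamVal, hlast] at this
    split_ifs at this <;> omega
  have key (w : Perm (Fin (2 * n))) : bruhatLE w lam ↔ n + 1 ≤ ap w (2 * n) := by
    rw [bruhatLE_iff_le_apply_last hlast ?_ w, Fin.le_def, hlam_last, hap_last]
    · omega
    intro a ha
    have hval := hlam_val a
    have := Fin.val_ne_of_ne ha
    simp only [lamVal, hlam_last] at hval ⊢
    split_ifs at hval ⊢ <;> omega
  have hinv : Function.Involutive (w₀ * ·) := fun x => by
    ext a
    have := hw₀_val (x a)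
    have := hw₀_val (w₀ (x a))
    simp only [Perm.mul_apply]
    omega
  refine ⟨key, Set.ext fun w => by simp only [Set.mem_ofPred_eq, key]; omega, ?_⟩
  rw [hinv.image_eq_preimage_symm]
  ext x
  have := hw₀_val (x last)
  simp only [Set.mem_preimage, Set.mem_compl_iff, Set.mem_ofPred_eq, hap_last, Perm.mul_apply]
  omega
end
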